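/- arXiv:1902.07714 — 3 statements merged into one kernel-verified Lean document; each statement's English description precedes it below -/
import Mathlib

section
/- Let T be a Hermitian operator on a d-dimensional space with d even, and let X = P₊ − P₋ where P₊ projects onto an orthonormal eigenbasis subset corresponding to the ⌊d/2⌋ largest eigenvalues of T and P₋ onto the ⌊d/2⌋ smallest. Then tr(X) = 0, ‖X‖_∞ ≤ 1, and tr(X·T) = ‖T − μ(T)·I‖₁ where μ(T) is a median eigenvalue of T. -/
open scoped ComplexOrder

/-- The trace norm (Schatten 1-norm) of a complex matrix: `‖A‖₁ = tr √(AᴴA)`. -/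
noncomputable def traceNorm {n : Type*} [Fintype n] [DecidableEq n] (A : Matrix n n ℂ) : ℝ :=
  ((((Matrix.posSemidef_conjTranspose_mul_self A).1.eigenvectorUnitary : Matrix n n ℂ) *
      Matrix.diagonal (((↑) : ℝ → ℂ) ∘ (Real.sqrt ∘ (Matrix.posSemidef_conjTranspose_mul_self A).1.eigenvalues)) *
      (star (Matrix.posSemidef_conjTranspose_mul_self A).1.eigenvectorUnitary : Matrix n n ℂ)).trace).re

/-- The operator (spectral) norm of a complex matrix. -/
noncomputable def opNorm {n : Type*} [Fintype n] [DecidableEq n] (A : Matrix n n ℂ) : ℝ :=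
  ‖LinearMap.toContinuousLinearMap (Matrix.toEuclideanLin A)‖

/-!
In an orthonormal eigenbasis of `T` everything is diagonal: `T` becomes `diag e` and `X` becomes
`diag ε` with `ε = (1, …, 1, -1, …, -1)`, half of each sign. Hence `tr X = ∑ εᵢ = 0`,
`‖X‖ = maxᵢ |εᵢ| ≤ 1` and `tr (X T) = ∑ εᵢ eᵢ = ∑ εᵢ (eᵢ - μ)`. Since the eigenvalues are sorted
and `μ` is a median, `eᵢ ≥ μ` where `εᵢ = 1` and `eᵢ ≤ μ` where `εᵢ = -1`, so each term is
`|eᵢ - μ|`; and `∑ |eᵢ - μ|` is the trace norm of `T - μ I`, which is unitarily equivalent to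
`diag (e - μ)`.
-/

open Finset Matrix Unitary
open scoped MatrixOrder Matrix.Norms.L2Operator

section Median

variable {n : ℕ} {e : Fin n → ℝ} {μ : ℝ}

theorem Antitone.le_of_lt_card_filter_le (he : Antitone e) {i : Fin n}
    (hi : (i : ℕ) < #{j | μ ≤ e j}) : μ ≤ e i := by
  by_contra! hlt
  have hsub : ({j | μ ≤ e j} : Finset (Fin n)) ⊆ Iio i := fun j hj =>
    mem_Iio.2 <| lt_of_not_ge fun hij => ((mem_filter.1 hj).2.trans (he hij)).not_gt hlt
  have := card_le_card hsub
  rw [Fin.card_Iio] at this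
  omega

theorem Antitone.le_of_le_add_card_filter_le (he : Antitone e) {i : Fin n}
    (hi : n ≤ i + #{j | e j ≤ μ}) : e i ≤ μ := by
  by_contra! hlt
  have hsub : ({j | e j ≤ μ} : Finset (Fin n)) ⊆ Ioi i := fun j hj =>
    mem_Ioi.2 <| lt_of_not_ge fun hji => (hlt.trans_le (he hji)).not_ge (mem_filter.1 hj).2
  have := card_le_card hsub
  rw [Fin.card_Ioi] at this
  omega

def splitSign (k : ℕ) (i : Fin n) : ℝ := if (i : ℕ) < k then 1 else -1

theorem sum_filter_lt_sub_sum_filter_le {𝕜 M : Type*} [RCLike 𝕜] [AddCommGroup M]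
    [Module 𝕜 M] (k : ℕ) (f : Fin n → M) :
    ∑ i ∈ univ.filter (fun i : Fin n => (i : ℕ) < k), f i
      - ∑ i ∈ univ.filter (fun i : Fin n => k ≤ (i : ℕ)), f i =
      ∑ i, (splitSign k i : 𝕜) • f i := by
  simp only [← not_lt, sum_filter, ← sum_sub_distrib, splitSign]
  refine sum_congr rfl fun i _ => ?_
  split_ifs <;> simp

theorem sum_splitSign_of_add_self_eq {k : ℕ} (h : k + k = n) :
    ∑ i : Fin n, splitSign k i = 0 := by
  have hlt : #{i : Fin n | (i : ℕ) < k} = k := by rw [Fin.card_filter_val_lt]; omega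
  have hge :=
    card_filter_add_card_filter_not (s := (univ : Finset (Fin n))) (fun i => (i : ℕ) < k)
  rw [card_univ, Fintype.card_fin, hlt] at hge
  simp only [splitSign, sum_ite, sum_const, nsmul_eq_mul, mul_one, mul_neg]
  rw [hlt, show #{i : Fin n | ¬(i : ℕ) < k} = k by omega]
  ring

theorem splitSign_mul_sub_eq_abs {k : ℕ} (he : Antitone e) (hge : k ≤ #{j | μ ≤ e j})
    (hle : n ≤ k + #{j | e j ≤ μ}) (i : Fin n) : splitSign k i * (e i - μ) = |e i - μ| := by
  unfold splitSign
  split_ifs with hi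
  · rw [one_mul, abs_of_nonneg (sub_nonneg.2 (he.le_of_lt_card_filter_le (by omega)))]
  · rw [neg_one_mul, abs_of_nonpos (sub_nonpos.2 (he.le_of_le_add_card_filter_le (by omega)))]

end Median

theorem sum_mul_eq_sum_abs_sub {ι : Type*} [Fintype ι] {ε e : ι → ℝ} {μ : ℝ}
    (hε : ∑ i, ε i = 0) (h : ∀ i, ε i * (e i - μ) = |e i - μ|) :
    ∑ i, ε i * e i = ∑ i, |e i - μ| := by
  calc ∑ i, ε i * e i = ∑ i, ε i * (e i - μ) + (∑ i, ε i) * μ := by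
        simp only [mul_sub, sum_sub_distrib, sum_mul, sub_add_cancel]
    _ = ∑ i, |e i - μ| := by rw [hε, zero_mul, add_zero, sum_congr rfl fun i _ => h i]

theorem CStarRing.norm_conjStarAlgAut {S E : Type*} [NormedRing E] [StarRing E] [CStarRing E]
    [SMul S E] [IsScalarTower S E E] [SMulCommClass S E E] (u : unitary E) (a : E) :
    ‖conjStarAlgAut S E u a‖ = ‖a‖ := by
  rw [conjStarAlgAut_apply, ← coe_star, norm_mul_coe_unitary, norm_coe_unitary_mul]

namespace Matrix

variable {ι R : Type*} [Fintype ι] [DecidableEq ι]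

theorem sum_smul_vecMulVec_star [CommSemiring R] [StarRing R] (v : ι → ι → R) (c : ι → R) :
    ∑ i, c i • vecMulVec (v i) (star (v i)) = (of v)ᵀ * diagonal c * (of v)ᵀᴴ := by
  ext j l
  rw [mul_apply]
  simp only [sum_apply, smul_apply, vecMulVec_apply, mul_diagonal, transpose_apply, of_apply,
    conjTranspose_apply, Pi.star_apply, smul_eq_mul]
  exact sum_congr rfl fun i _ => by ring

theorem transpose_of_mem_unitaryGroup_of_orthonormal [CommRing R] [StarRing R]
    {v : ι → ι → R} (hv : ∀ i j, star (v i) ⬝ᵥ v j = if i = j then 1 else 0) :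
    (of v)ᵀ ∈ unitaryGroup ι R := by
  rw [mem_unitaryGroup_iff']
  ext i j
  simpa [mul_apply, dotProduct, one_apply] using hv i j

theorem eq_conjStarAlgAut_diagonal_of_mulVec_eq [CommRing R] [StarRing R] {v : ι → ι → R}
    (hv : (of v)ᵀ ∈ unitaryGroup ι R) {T : Matrix ι ι R} {c : ι → R}
    (h : ∀ i, T *ᵥ v i = c i • v i) : T = conjStarAlgAut R _ ⟨_, hv⟩ (diagonal c) := by
  have hTU : T * (of v)ᵀ = (of v)ᵀ * diagonal c := by
    ext j i
    rw [mul_diagonal]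
    simpa [mul_apply, mulVec, dotProduct, mul_comm] using congrFun (h i) j
  rw [conjStarAlgAut_apply, ← hTU, mul_assoc, mul_star_self_of_mem hv, mul_one]

theorem trace_conjStarAlgAut [CommRing R] [StarRing R] (u : unitaryGroup ι R)
    (A : Matrix ι ι R) : (conjStarAlgAut R _ u A).trace = A.trace := by
  rw [conjStarAlgAut_apply, trace_mul_cycle, coe_star_mul_self, one_mul]

end Matrix

section TraceNorm

variable {ι : Type*} [Fintype ι] [DecidableEq ι]

theorem traceNorm_eq_re_trace_sqrt (A : Matrix ι ι ℂ) :
    traceNorm A = (CFC.sqrt (Aᴴ * A)).trace.re := by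
  have hA := posSemidef_conjTranspose_mul_self A
  rw [CFC.sqrt_eq_real_sqrt _ hA.nonneg, cfcₙ_eq_cfc, hA.1.cfc_eq]
  rfl

theorem traceNorm_conjStarAlgAut_diagonal (u : unitaryGroup ι ℂ) (f : ι → ℝ) :
    traceNorm (conjStarAlgAut ℂ _ u (diagonal fun i => (f i : ℂ))) = ∑ i, |f i| := by
  set φ := conjStarAlgAut ℂ (Matrix ι ι ℂ) u
  set B := φ (diagonal fun i => ((|f i| : ℝ) : ℂ))
  have hB : 0 ≤ B := map_nonneg φ (posSemidef_diagonal_iff.2 fun i => by simp).nonneg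
  have hBB :
      B * B = (φ (diagonal fun i => (f i : ℂ)))ᴴ * φ (diagonal fun i => (f i : ℂ)) := by
    rw [← star_eq_conjTranspose, ← map_star, ← map_mul, ← map_mul, star_eq_conjTranspose,
      diagonal_conjTranspose, diagonal_mul_diagonal, diagonal_mul_diagonal]
    congr 2
    ext i
    simp [← Complex.ofReal_mul, abs_mul_abs_self]
  rw [traceNorm_eq_re_trace_sqrt, ← hBB, CFC.sqrt_mul_self B hB, trace_conjStarAlgAut,
    trace_diagonal, ← Complex.ofReal_sum, Complex.ofReal_re]

end TraceNorm

theorem spectral_split_achieves_traceNorm_general (d : ℕ) (hdeven : Even d)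
    (T : Matrix (Fin d) (Fin d) ℂ)
    (e : Fin d → ℝ) (he : Antitone e)
    (v : Fin d → Fin d → ℂ)
    (hortho : ∀ i j : Fin d, dotProduct (star (v i)) (v j) = if i = j then 1 else 0)
    (heig : ∀ i : Fin d, T.mulVec (v i) = (e i : ℂ) • v i)
    (μ : ℝ)
    (hμle : (d + 1) / 2 ≤ (Finset.univ.filter (fun i : Fin d => e i ≤ μ)).card)
    (hμge : (d + 1) / 2 ≤ (Finset.univ.filter (fun i : Fin d => μ ≤ e i)).card)
    (X : Matrix (Fin d) (Fin d) ℂ)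
    (hX : X =
      (∑ i ∈ Finset.univ.filter (fun i : Fin d => (i : ℕ) < d / 2),
        Matrix.vecMulVec (v i) (star (v i)))
      - (∑ i ∈ Finset.univ.filter (fun i : Fin d => d / 2 ≤ (i : ℕ)),
        Matrix.vecMulVec (v i) (star (v i)))) :
    X.trace = 0 ∧ opNorm X ≤ 1 ∧
      ((X * T).trace).re = traceNorm (T - (μ : ℂ) • (1 : Matrix (Fin d) (Fin d) ℂ)) := by
  obtain ⟨k, hk⟩ := hdeven
  have hU := transpose_of_mem_unitaryGroup_of_orthonormal hortho
  set φ := conjStarAlgAut ℂ _ (⟨_, hU⟩ : unitaryGroup (Fin d) ℂ)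
  have hTφ : T = φ (diagonal fun i => (e i : ℂ)) :=
    eq_conjStarAlgAut_diagonal_of_mulVec_eq hU heig
  have hXφ : X = φ (diagonal fun i => (splitSign k i : ℂ)) := by
    rw [hX, show d / 2 = k by omega, sum_filter_lt_sub_sum_filter_le (𝕜 := ℂ),
      sum_smul_vecMulVec_star]
    rfl
  have hsign : ∑ i, splitSign k i = 0 := sum_splitSign_of_add_self_eq hk.symm
  refine ⟨?_, ?_, ?_⟩
  · rw [hXφ, trace_conjStarAlgAut, trace_diagonal]
    exact_mod_cast hsign
  · change ‖X‖ ≤ 1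
    rw [hXφ, CStarRing.norm_conjStarAlgAut, l2_opNorm_diagonal]
    refine (pi_norm_le_iff_of_nonneg zero_le_one).2 fun i => ?_
    unfold splitSign
    split_ifs <;> simp
  · have hshift : T - (μ : ℂ) • 1 = φ (diagonal fun i => ((e i - μ : ℝ) : ℂ)) := by
      rw [hTφ, ← map_one φ, ← map_smul, ← map_sub, smul_one_eq_diagonal, diagonal_sub]
      push_cast
      rfl
    rw [hshift, traceNorm_conjStarAlgAut_diagonal, hXφ, hTφ, ← map_mul, trace_conjStarAlgAut,
      diagonal_mul_diagonal, trace_diagonal]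
    norm_cast
    exact sum_mul_eq_sum_abs_sub hsign (splitSign_mul_sub_eq_abs he (by omega) (by omega))

/-- Let `T` be Hermitian on a `d`-dimensional space with `d` even,
diagonalized by an orthonormal eigenbasis `v` with nonincreasing eigenvalues `e`.
Let `X = P₊ − P₋`, where `P₊` (resp. `P₋`) is the spectral projection onto the span of
the eigenvectors of the `⌊d/2⌋` largest (resp. smallest) eigenvalues.  Then
`tr X = 0`, `‖X‖_∞ ≤ 1`, and `tr(X·T) = ‖T − μ(T)·I‖₁` for any median eigenvalue `μ(T)`. -/
theorem spectral_split_achieves_traceNorm (d : ℕ) (hd : 0 < d) (hdeven : Even d)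
    (T : Matrix (Fin d) (Fin d) ℂ) (hT : T.IsHermitian)
    (e : Fin d → ℝ) (he : Antitone e)
    (v : Fin d → Fin d → ℂ)
    (hortho : ∀ i j : Fin d, dotProduct (star (v i)) (v j) = if i = j then 1 else 0)
    (heig : ∀ i : Fin d, T.mulVec (v i) = (e i : ℂ) • v i)
    (μ : ℝ)
    (hμle : (d + 1) / 2 ≤ (Finset.univ.filter (fun i : Fin d => e i ≤ μ)).card)
    (hμge : (d + 1) / 2 ≤ (Finset.univ.filter (fun i : Fin d => μ ≤ e i)).card)
    (X : Matrix (Fin d) (Fin d) ℂ)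
    (hX : X =
      (∑ i ∈ Finset.univ.filter (fun i : Fin d => (i : ℕ) < d / 2),
        Matrix.vecMulVec (v i) (star (v i)))
      - (∑ i ∈ Finset.univ.filter (fun i : Fin d => d / 2 ≤ (i : ℕ)),
        Matrix.vecMulVec (v i) (star (v i)))) :
    X.trace = 0 ∧ opNorm X ≤ 1 ∧
      ((X * T).trace).re = traceNorm (T - (μ : ℂ) • (1 : Matrix (Fin d) (Fin d) ℂ)) :=
  spectral_split_achieves_traceNorm_general d hdeven T e he v hortho heig μ hμle hμge X hX
end

section
/- Fix a positive integer d ≥ 2 and a positive integer l. Among all partitions λ = (λ₁ ≥ λ₂ ≥ ⋯ ≥ λ_d = 0) of nonnegative integers with λ₁ = l, the Weyl dimension D_λ = ∏_{1 ≤ i < j ≤ d} (λ_i − λ_j + j − i)/(j − i) is minimized by the symmetric partition λ = (l, 0, …, 0), whose dimension equals the binomial coefficient C(d−1+l, d−1). That is, C(d−1+l, d−1) ≤ D_λ for every such λ. -/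
/-! Index `λ` from `0` and split `D_λ` into the columns `∏_{i<j} (λ_i − λ_j + j − i)/(j − i)`.
With `a = λ₀ − λₙ` and `c = λₙ − λₙ₊₁`, lowering every `λ_i` with `0 < i ≤ n` to `λₙ` bounds the
column `j = n + 1` below by `C(c + n, n) · (a + c + n + 1)/(n + 1)`. As
`C(a + c + n, n) ≤ C(a + n, n) · C(c + n, n)`, induction on `n` gives
`C(λ₀ − λₙ + n, n) ≤ ∏_{j ≤ n} (column j)`, and `n = d − 1` is the theorem. -/

/-- The Weyl dimension of the irreducible representation of `U(d)` with highest weight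
`λ = (λ₁ ≥ ⋯ ≥ λ_d)`:  `D_λ = ∏_{i<j} (λ_i − λ_j + j − i)/(j − i)`. -/
noncomputable def weylDim (d : ℕ) (lam : Fin d → ℕ) : ℝ :=
  ∏ p ∈ Finset.univ.filter (fun p : Fin d × Fin d => p.1 < p.2),
    (((lam p.1 : ℝ) - (lam p.2 : ℝ) + ((p.2 : ℕ) : ℝ) - ((p.1 : ℕ) : ℝ)) /
      (((p.2 : ℕ) : ℝ) - ((p.1 : ℕ) : ℝ)))

open Finset

/-- The binomial coefficient `C(x + n, n)`, written as a product so that `x` may be real. -/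
noncomputable def addChoose (x : ℝ) (n : ℕ) : ℝ :=
  ∏ m ∈ range n, (x + m + 1) / (m + 1)

theorem addChoose_succ (x : ℝ) (n : ℕ) :
    addChoose x (n + 1) = addChoose x n * ((x + n + 1) / (n + 1)) :=
  prod_range_succ _ _

theorem addChoose_natCast (k n : ℕ) : addChoose k n = (k + n).choose n := by
  induction n with
  | zero => simp [addChoose]
  | succ n ih =>
    have h : ((k + n + 1 : ℕ) : ℝ) * (k + n).choose n = (k + n + 1).choose (n + 1) * (n + 1) := by
      exact_mod_cast Nat.add_one_mul_choose_eq (k + n) n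
    rw [addChoose_succ, ih, ← add_assoc, mul_div_assoc', div_eq_iff (by positivity), mul_comm]
    exact_mod_cast h

theorem addChoose_nonneg {x : ℝ} (hx : 0 ≤ x) (n : ℕ) : 0 ≤ addChoose x n :=
  prod_nonneg fun _ _ => by positivity

theorem addChoose_add_le_mul {a c : ℝ} (ha : 0 ≤ a) (hc : 0 ≤ c) (n : ℕ) :
    addChoose (a + c) n ≤ addChoose a n * addChoose c n := by
  rw [addChoose, addChoose, addChoose, ← prod_mul_distrib]
  refine prod_le_prod (fun _ _ => by positivity) fun m _ => ?_
  rw [div_mul_div_comm, div_le_div_iff₀ (by positivity) (by positivity)]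
  nlinarith [mul_nonneg (mul_nonneg ha hc) (by positivity : (0 : ℝ) ≤ m + 1)]

noncomputable def weylFactor (ν : ℕ → ℝ) (i j : ℕ) : ℝ :=
  (ν i - ν j + j - i) / (j - i)

theorem weylDim_eq_prod_range {d : ℕ} {lam : Fin d → ℕ} {ν : ℕ → ℝ}
    (hν : ∀ i : Fin d, ν i = lam i) :
    weylDim d lam = ∏ j ∈ range d, ∏ i ∈ range j, weylFactor ν i j := by
  rw [weylDim, prod_filter, Fintype.prod_prod_type_right, ← Fin.prod_univ_eq_prod_range]
  refine prod_congr rfl fun j _ => ?_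
  have hfilter : (range d).filter (· < (j : ℕ)) = range j := by
    ext i; simp only [mem_filter, mem_range]; omega
  rw [← hfilter, prod_filter, ← Fin.prod_univ_eq_prod_range]
  refine prod_congr rfl fun i _ => ?_
  simp only [weylFactor, hν, Fin.lt_def]

theorem addChoose_mul_le_prod_weylFactor {ν : ℕ → ℝ} (hν : Antitone ν) (n : ℕ) :
    addChoose (ν n - ν (n + 1)) n * ((ν 0 - ν (n + 1) + n + 1) / (n + 1)) ≤
      ∏ i ∈ range (n + 1), weylFactor ν i (n + 1) := by
  have hc : 0 ≤ ν n - ν (n + 1) := sub_nonneg.2 (hν n.le_succ)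
  have hfirst : weylFactor ν 0 (n + 1) = (ν 0 - ν (n + 1) + n + 1) / (n + 1) := by
    simp only [weylFactor]; push_cast; ring_nf
  have hrest : addChoose (ν n - ν (n + 1)) n ≤ ∏ i ∈ range n, weylFactor ν (i + 1) (n + 1) := by
    rw [addChoose, ← prod_range_reflect]
    refine prod_le_prod (fun _ _ => by positivity) fun i hi => ?_
    rw [mem_range] at hi
    have hrefl : ((n - 1 - i : ℕ) : ℝ) = n - 1 - i := by
      rw [Nat.cast_sub (by omega), Nat.cast_sub (by omega)]; push_cast; ring
    have hden : (0 : ℝ) < n - i := by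
      have : (i : ℝ) < n := by exact_mod_cast hi
      linarith
    have hmono : ν n ≤ ν (i + 1) := hν (by omega)
    rw [weylFactor, hrefl]; push_cast
    rw [div_le_div_iff₀ (by linarith) (by linarith)]
    nlinarith
  rw [prod_range_succ', hfirst]
  have h0 : ν (n + 1) ≤ ν 0 := hν (Nat.zero_le _)
  exact mul_le_mul_of_nonneg_right hrest (div_nonneg (by linarith) (by positivity))

theorem addChoose_le_prod_weylFactor {ν : ℕ → ℝ} (hν : Antitone ν) (n : ℕ) :
    addChoose (ν 0 - ν n) n ≤ ∏ j ∈ range (n + 1), ∏ i ∈ range j, weylFactor ν i j := by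
  induction n with
  | zero => simp [addChoose]
  | succ n ih =>
    have ha : 0 ≤ ν 0 - ν n := sub_nonneg.2 (hν n.zero_le)
    have hc : 0 ≤ ν n - ν (n + 1) := sub_nonneg.2 (hν n.le_succ)
    have hlast : 0 ≤ (ν 0 - ν (n + 1) + n + 1) / (n + 1) :=
      div_nonneg (by linarith) (by positivity)
    calc addChoose (ν 0 - ν (n + 1)) (n + 1)
        = addChoose ((ν 0 - ν n) + (ν n - ν (n + 1))) n * ((ν 0 - ν (n + 1) + n + 1) / (n + 1)) := by
          rw [addChoose_succ, sub_add_sub_cancel]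
      _ ≤ addChoose (ν 0 - ν n) n *
            (addChoose (ν n - ν (n + 1)) n * ((ν 0 - ν (n + 1) + n + 1) / (n + 1))) := by
          rw [← mul_assoc]
          exact mul_le_mul_of_nonneg_right (addChoose_add_le_mul ha hc n) hlast
      _ ≤ (∏ j ∈ range (n + 1), ∏ i ∈ range j, weylFactor ν i j) *
            ∏ i ∈ range (n + 1), weylFactor ν i (n + 1) :=
          mul_le_mul ih (addChoose_mul_le_prod_weylFactor hν n)
            (mul_nonneg (addChoose_nonneg hc n) hlast) ((addChoose_nonneg ha n).trans ih)
      _ = ∏ j ∈ range (n + 1 + 1), ∏ i ∈ range j, weylFactor ν i j := (prod_range_succ _ _).symm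

/-- Among all partitions `λ₁ ≥ ⋯ ≥ λ_d = 0` with `λ₁ = l`, the Weyl
dimension is minimized by the symmetric partition `(l, 0, …, 0)`, whose dimension is the
binomial coefficient `C(d−1+l, d−1)`. -/
theorem symmetric_rep_min_dim (d l : ℕ) (hd : 2 ≤ d)
    (lam : Fin d → ℕ) (hanti : Antitone lam)
    (hfirst : lam ⟨0, by omega⟩ = l) (hlast : lam ⟨d - 1, by omega⟩ = 0) :
    ((d - 1 + l).choose (d - 1) : ℝ) ≤ weylDim d lam := by
  set ν : ℕ → ℝ := fun k => lam ⟨min k (d - 1), by omega⟩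
  have hν : Antitone ν := fun x y hxy =>
    Nat.cast_le.2 (hanti (Fin.mk_le_mk.2 (min_le_min_right _ hxy)))
  have hνlam : ∀ i : Fin d, ν i = lam i := fun i => by
    simp only [ν, min_eq_left (Nat.le_sub_one_of_lt i.isLt)]
  have h := addChoose_le_prod_weylFactor hν (d - 1)
  rw [Nat.sub_add_cancel (by omega), ← weylDim_eq_prod_range hνlam] at h
  have hν0 : ν 0 = l := by simp only [ν, Nat.zero_min, hfirst]
  have hνlast : ν (d - 1) = 0 := by simp only [ν, min_self, hlast, Nat.cast_zero]
  rwa [hν0, hνlast, sub_zero, addChoose_natCast, add_comm] at h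
end

section
/- Let h be a positive even integer, let w > 0 be real, and let x be an integer with |x| ≤ h. Then (1/c_w) · Σ_{y∈ℤ} exp(−((y+x)² + y²)/(4w²)) ≥ exp(−h²/(8w²)), where c_w = Σ_{y∈ℤ} exp(−y²/(2w²)). -/
/-!
Completing the square, `(y + x)² + y² = 2 (y + x/2)² + x²/2`, turns the numerator into
`exp (-x²/(8w²))` times the Gaussian sum over the coset `ℤ + x/2`, which by periodicity is the sum
over `ℤ` (`x` even) or over `ℤ + 1/2` (`x` odd). In the odd case, pairing the summands at `n + 1/2`
and `n - 1/2` and using convexity of `exp` gives `θ₂ ≥ exp (-1/(8w²)) θ₃`; this extra factor is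
absorbed because an odd `|x|` is at most `h - 1` when `h` is even.
-/

open Real Set

/-- For `t = 0` and `t = 1/2` this is `θ₃(0, q)` resp. `θ₂(0, q)` with `q = exp (-1/b)`. -/
noncomputable def shiftedGaussSum (b t : ℝ) : ℝ := ∑' n : ℤ, exp (-((n : ℝ) + t) ^ 2 / b)

lemma summable_exp_neg_add_sq_div {b : ℝ} (hb : 0 < b) (t : ℝ) :
    Summable fun n : ℤ => exp (-((n : ℝ) + t) ^ 2 / b) := by
  refine (HurwitzKernelBounds.summable_f_int 0 t (by positivity : 0 < 1 / (π * b))).congr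
    fun n => ?_
  simp only [HurwitzKernelBounds.f_int, pow_zero, one_mul]
  congr 1
  field_simp

lemma shiftedGaussSum_pos {b : ℝ} (hb : 0 < b) (t : ℝ) : 0 < shiftedGaussSum b t :=
  (summable_exp_neg_add_sq_div hb t).tsum_pos (fun _ => (exp_pos _).le) 0 (exp_pos _)

lemma shiftedGaussSum_add_intCast (b t : ℝ) (k : ℤ) :
    shiftedGaussSum b (t + k) = shiftedGaussSum b t := by
  rw [shiftedGaussSum, shiftedGaussSum,
    ← (Equiv.addRight k).tsum_eq fun n : ℤ => exp (-((n : ℝ) + t) ^ 2 / b)]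
  refine tsum_congr fun n => ?_
  push_cast [Equiv.coe_addRight]
  ring_nf

lemma shiftedGaussSum_neg (b t : ℝ) : shiftedGaussSum b (-t) = shiftedGaussSum b t := by
  rw [shiftedGaussSum, shiftedGaussSum, ← (Equiv.neg ℤ).tsum_eq]
  refine tsum_congr fun n => ?_
  push_cast [Equiv.neg_apply]
  ring_nf

lemma exp_neg_sq_div_mul_shiftedGaussSum_zero_le {b : ℝ} (hb : 0 < b) (t : ℝ) :
    exp (-t ^ 2 / b) * shiftedGaussSum b 0 ≤ shiftedGaussSum b t := by
  have hsum := summable_exp_neg_add_sq_div hb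
  -- `(n + t)² + (n - t)² = 2 (n² + t²)`, so convexity of `exp` bounds the summand at `0`.
  have hmid (n : ℤ) : exp (-t ^ 2 / b) * exp (-((n : ℝ) + 0) ^ 2 / b) ≤
      (exp (-((n : ℝ) + t) ^ 2 / b) + exp (-((n : ℝ) + -t) ^ 2 / b)) / 2 := by
    have := convexOn_exp.2 (mem_univ (-((n : ℝ) + t) ^ 2 / b))
      (mem_univ (-((n : ℝ) + -t) ^ 2 / b)) (by norm_num : (0 : ℝ) ≤ 1 / 2)
      (by norm_num : (0 : ℝ) ≤ 1 / 2) (by norm_num)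
    simp only [smul_eq_mul] at this
    calc exp (-t ^ 2 / b) * exp (-((n : ℝ) + 0) ^ 2 / b)
        = exp (1 / 2 * (-((n : ℝ) + t) ^ 2 / b) + 1 / 2 * (-((n : ℝ) + -t) ^ 2 / b)) := by
          rw [← exp_add]
          congr 1
          field_simp
          ring
      _ ≤ _ := this
      _ = _ := by ring
  calc exp (-t ^ 2 / b) * shiftedGaussSum b 0
      = ∑' n : ℤ, exp (-t ^ 2 / b) * exp (-((n : ℝ) + 0) ^ 2 / b) := tsum_mul_left.symm
    _ ≤ ∑' n : ℤ, (exp (-((n : ℝ) + t) ^ 2 / b) + exp (-((n : ℝ) + -t) ^ 2 / b)) / 2 :=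
        ((hsum 0).mul_left _).tsum_le_tsum hmid (((hsum t).add (hsum (-t))).div_const 2)
    _ = (shiftedGaussSum b t + shiftedGaussSum b (-t)) / 2 := by
        rw [tsum_div_const, (hsum t).tsum_add (hsum (-t))]
        rfl
    _ = shiftedGaussSum b t := by
        rw [shiftedGaussSum_neg]
        ring

lemma sq_add_emod_two_sq_le_sq {x h : ℤ} (he : Even h) (hx : |x| ≤ h) :
    x ^ 2 + (x % 2) ^ 2 ≤ h ^ 2 := by
  obtain ⟨r, rfl⟩ := he
  have habs : |x| + x % 2 ≤ r + r := by
    rcases abs_cases x with ⟨_, _⟩ | ⟨_, _⟩ <;> omega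
  have hr : 0 ≤ x % 2 ∧ x % 2 ≤ 1 := by omega
  nlinarith [abs_nonneg x, sq_abs x]

theorem gaussian_overlap_lower_bound_general (h : ℕ) (hhe : Even h)
    (w : ℝ) (hw : 0 < w) (x : ℤ) (hx : |(x : ℝ)| ≤ (h : ℝ)) :
    Real.exp (-(h : ℝ) ^ 2 / (8 * w ^ 2)) ≤
      (∑' y : ℤ, Real.exp (-(((y : ℝ) + (x : ℝ)) ^ 2 + (y : ℝ) ^ 2) / (4 * w ^ 2))) /
        (∑' y : ℤ, Real.exp (-(y : ℝ) ^ 2 / (2 * w ^ 2))) := by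
  have hb : 0 < 2 * w ^ 2 := by positivity
  have hden : ∑' y : ℤ, exp (-(y : ℝ) ^ 2 / (2 * w ^ 2)) = shiftedGaussSum (2 * w ^ 2) 0 := by
    simp only [shiftedGaussSum, add_zero]
  have hnum : ∑' y : ℤ, exp (-(((y : ℝ) + x) ^ 2 + (y : ℝ) ^ 2) / (4 * w ^ 2)) =
      exp (-(x : ℝ) ^ 2 / (8 * w ^ 2)) * shiftedGaussSum (2 * w ^ 2) (x / 2) := by
    rw [shiftedGaussSum, ← tsum_mul_left]
    refine tsum_congr fun y => ?_
    rw [← exp_add]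
    congr 1
    field_simp
    ring
  have hred : shiftedGaussSum (2 * w ^ 2) (x / 2) =
      shiftedGaussSum (2 * w ^ 2) ((x % 2 : ℤ) / 2) := by
    have hdiv : (x : ℝ) = (x % 2 : ℤ) + 2 * (x / 2 : ℤ) := by
      exact_mod_cast (Int.emod_add_mul_ediv x 2).symm
    rw [← shiftedGaussSum_add_intCast _ ((x % 2 : ℤ) / 2) (x / 2)]
    congr 1
    linear_combination hdiv / 2
  have hsq : (x : ℝ) ^ 2 + ((x % 2 : ℤ) : ℝ) ^ 2 ≤ (h : ℝ) ^ 2 := by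
    exact_mod_cast sq_add_emod_two_sq_le_sq ((Int.even_coe_nat h).2 hhe) (by exact_mod_cast hx)
  have hpos := shiftedGaussSum_pos hb 0
  rw [hden, hnum, hred, le_div_iff₀ hpos]
  calc exp (-(h : ℝ) ^ 2 / (8 * w ^ 2)) * shiftedGaussSum (2 * w ^ 2) 0
      ≤ exp (-(x : ℝ) ^ 2 / (8 * w ^ 2)) *
          (exp (-(((x % 2 : ℤ) : ℝ) / 2) ^ 2 / (2 * w ^ 2)) * shiftedGaussSum (2 * w ^ 2) 0) := by
        rw [← mul_assoc, ← exp_add]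
        gcongr
        calc -(h : ℝ) ^ 2 / (8 * w ^ 2) ≤ -((x : ℝ) ^ 2 + ((x % 2 : ℤ) : ℝ) ^ 2) / (8 * w ^ 2) := by
              gcongr
          _ = _ := by
              field_simp
              ring
    _ ≤ _ := by
        gcongr
        exact exp_neg_sq_div_mul_shiftedGaussSum_zero_le hb _

/-- For `h` a positive even integer, `w > 0`, and an integer `x` with
`|x| ≤ h`:  `(1/c_w) · Σ_{y∈ℤ} exp(−((y+x)² + y²)/(4w²)) ≥ exp(−h²/(8w²))`, where
`c_w = Σ_{y∈ℤ} exp(−y²/(2w²))`. -/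
theorem gaussian_overlap_lower_bound (h : ℕ) (hh : 0 < h) (hhe : Even h)
    (w : ℝ) (hw : 0 < w) (x : ℤ) (hx : |(x : ℝ)| ≤ (h : ℝ)) :
    Real.exp (-(h : ℝ) ^ 2 / (8 * w ^ 2)) ≤
      (∑' y : ℤ, Real.exp (-(((y : ℝ) + (x : ℝ)) ^ 2 + (y : ℝ) ^ 2) / (4 * w ^ 2))) /
        (∑' y : ℤ, Real.exp (-(y : ℝ) ^ 2 / (2 * w ^ 2))) :=
  gaussian_overlap_lower_bound_general h hhe w hw x hx
end
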